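/- arXiv:2102.09374 — 3 statements merged into one kernel-verified Lean document; each statement's English description precedes it below -/
import Mathlib

section
/- The completely erasing substitution σ₃ is not boundedly erasing: the vanishing order ε(·) is unbounded on {0,1}^*. Specifically, for every m ∈ ℕ, the word 1^{2m} satisfies σ₃²(1^{2m}) = 1^m, so ε(1^{2m}) → ∞ as m → ∞. -/
/-- The alternating extension of a block substitution given by simple
substitutions `s i : Bool -> List Bool` applied to the digit in position `i` mod `k`. -/
def altApply (k : Nat) (s : Nat -> Bool -> List Bool) (w : List Bool) : List Bool :=
  (w.zipIdx.map fun p => s (p.2 % k) p.1).flatten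

/-- The simple substitutions of the alternating 2-block substitution σ₃:
position ≡ 0 (mod 2): 0 ↦ ε, 1 ↦ 0; position ≡ 1 (mod 2): 0 ↦ ε, 1 ↦ 1.
Thus σ₃(00)=ε, σ₃(01)=1, σ₃(10)=0, σ₃(11)=01. -/
def s3 : Nat -> Bool -> List Bool := fun i b =>
  if b then (if i % 2 = 0 then [false] else [true]) else []

/-!
On words of even length σ₃ acts block by block, with `11 ↦ 01` and `01 ↦ 1`, so two steps
halve a run of ones: `σ₃²(1^{2m}) = 1^m`. Hence `1^{2^N}` is still `1` after `2N` steps, and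
since `ε` is a fixed point of σ₃, no earlier iterate can have erased it.
-/

theorem altApply_nil (k : Nat) (s : Nat -> Bool -> List Bool) : altApply k s [] = [] := rfl

theorem altApply_append {k : Nat} {s : Nat -> Bool -> List Bool} {u : List Bool}
    (hu : k ∣ u.length) (w : List Bool) :
    altApply k s (u ++ w) = altApply k s u ++ altApply k s w := by
  have hshift : (w.zipIdx u.length).map (fun p => s (p.2 % k) p.1)
      = w.zipIdx.map (fun p => s (p.2 % k) p.1) := by
    rw [List.zipIdx_eq_map_add, List.map_map]
    congr 1
    funext p
    simp [Nat.add_mod, Nat.mod_eq_zero_of_dvd hu]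
  simp only [altApply, List.zipIdx_append, List.map_append, List.flatten_append, Nat.zero_add,
    hshift]

theorem altApply_flatten_replicate {k : Nat} {s : Nat -> Bool -> List Bool} {u : List Bool}
    (hu : k ∣ u.length) (m : Nat) :
    altApply k s (List.replicate m u).flatten = (List.replicate m (altApply k s u)).flatten := by
  induction m with
  | zero => rfl
  | succ m ih =>
    simp only [List.replicate_succ, List.flatten_cons, altApply_append hu, ih]

theorem altApply_s3_replicate_true (m : Nat) :
    altApply 2 s3 (List.replicate (2 * m) true) = (List.replicate m [false, true]).flatten := by
  rw [Nat.mul_comm, ← List.flatten_replicate_replicate]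
  exact altApply_flatten_replicate (dvd_refl 2) m

theorem altApply_s3_replicate_false_true (m : Nat) :
    altApply 2 s3 (List.replicate m [false, true]).flatten = List.replicate m true := by
  rw [altApply_flatten_replicate (dvd_refl 2) m]
  exact List.flatten_replicate_singleton

theorem sigma3_iterate_two_replicate (m : Nat) :
    (altApply 2 s3)^[2] (List.replicate (2 * m) true) = List.replicate m true := by
  rw [Function.iterate_succ_apply, Function.iterate_one, altApply_s3_replicate_true,
    altApply_s3_replicate_false_true]

theorem sigma3_iterate_two_mul_replicate (k m : Nat) :
    (altApply 2 s3)^[2 * k] (List.replicate (2 ^ k * m) true) = List.replicate m true := by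
  induction k generalizing m with
  | zero => simp
  | succ k ih =>
    rw [Nat.mul_succ, Function.iterate_add_apply, pow_succ', Nat.mul_assoc,
      sigma3_iterate_two_replicate, ih]

theorem Function.iterate_ne_of_isFixedPt_of_le {α : Type*} {f : α → α} {x a : α}
    (hx : Function.IsFixedPt f x) {m n : Nat} (hm : f^[m] a ≠ x) (hn : n ≤ m) :
    f^[n] a ≠ x := by
  intro ha
  apply hm
  rw [← Nat.sub_add_cancel hn, Function.iterate_add_apply, ha, Function.iterate_fixed hx]

/-- σ₃ is not boundedly erasing: `σ₃²(1^{2m}) = 1^m` for every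
`m`, and the vanishing order is unbounded on finite words: for every `N` there
is a word not erased by any of the first `N` iterates. -/
theorem sigma3_not_boundedly_erasing :
    (∀ m : Nat, (altApply 2 s3)^[2] (List.replicate (2 * m) true)
        = List.replicate m true) ∧
    (∀ N : Nat, ∃ w : List Bool, ∀ n ≤ N, (altApply 2 s3)^[n] w ≠ []) := by
  refine ⟨sigma3_iterate_two_replicate, fun N => ⟨List.replicate (2 ^ N) true, fun n hn => ?_⟩⟩
  have hsurvives : (altApply 2 s3)^[2 * N] (List.replicate (2 ^ N) true) ≠ [] := by
    rw [← Nat.mul_one (2 ^ N), sigma3_iterate_two_mul_replicate]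
    exact List.cons_ne_nil _ _
  exact Function.iterate_ne_of_isFixedPt_of_le (altApply_nil 2 s3) hsurvives (by omega)
end

section
/- The 3-block substitution σ₄ (with σ₄(000)=ε, σ₄(001)=000, σ₄(010)=001, σ₄(011)=001000, σ₄(100)=010, σ₄(101)=010000, σ₄(110)=010001, σ₄(111)=010001000) is boundedly erasing: for every finite binary word w, σ₄⁸(w) = ε. -/
/-- The simple substitutions of the alternating 3-block substitution σ₄:
all 0s go to ε; a 1 in position ≡ 0, 1, 2 (mod 3) goes to 010, 001, 000
respectively. -/
def s4 : Nat -> Bool -> List Bool := fun i b =>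
  if b then
    (if i % 3 = 0 then [false, true, false]
     else if i % 3 = 1 then [false, false, true]
     else [false, false, false])
  else []

/-!
Every digit is sent by σ₄ to ε or to one of the blocks `010`, `001`, `000`, so `σ₄(w)` is a
concatenation of these blocks. Since they have length 3, the position classes mod 3 seen by σ₄
restart at each block, so σ₄ acts on such a word block by block; and it moves each block one step
down the chain `010 ↦ 001 ↦ 000 ↦ ε`. Hence `σ₄⁴(w) = ε`, and a fortiori `σ₄⁸(w) = ε`.
-/

open Computability

section AlternatingSubstitution

variable {k : ℕ} {s : ℕ → Bool → List Bool}

def altApplyFrom (k : ℕ) (s : ℕ → Bool → List Bool) (n : ℕ) (w : List Bool) : List Bool :=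
  ((w.zipIdx n).map fun p => s (p.2 % k) p.1).flatten

theorem altApplyFrom_zero : altApplyFrom k s 0 = altApply k s := rfl

theorem altApplyFrom_cons (n : ℕ) (c : Bool) (w : List Bool) :
    altApplyFrom k s n (c :: w) = s (n % k) c ++ altApplyFrom k s (n + 1) w := by
  simp [altApplyFrom, List.zipIdx_cons]

theorem altApplyFrom_congr {n m : ℕ} (h : n ≡ m [MOD k]) (w : List Bool) :
    altApplyFrom k s n w = altApplyFrom k s m w := by
  induction w generalizing n m with
  | nil => rfl
  | cons c w ih => rw [altApplyFrom_cons, altApplyFrom_cons, h, ih (h.add_right 1)]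

theorem altApplyFrom_append (n : ℕ) (u v : List Bool) :
    altApplyFrom k s n (u ++ v) = altApplyFrom k s n u ++ altApplyFrom k s (n + u.length) v := by
  induction u generalizing n with
  | nil => simp [altApplyFrom]
  | cons c u ih =>
    rw [List.cons_append, altApplyFrom_cons, altApplyFrom_cons, ih, List.append_assoc,
      List.length_cons, Nat.add_right_comm, Nat.add_assoc]

theorem altApply_append_of_dvd {u : List Bool} (hu : k ∣ u.length) (v : List Bool) :
    altApply k s (u ++ v) = altApply k s u ++ altApply k s v := by
  rw [← altApplyFrom_zero, altApplyFrom_append,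
    altApplyFrom_congr (n := 0 + u.length) (m := 0) (by simpa using Nat.modEq_zero_iff_dvd.2 hu)]

theorem altApply_flatten {L : List (List Bool)} (hL : ∀ b ∈ L, k ∣ b.length) :
    altApply k s L.flatten = (L.map (altApply k s)).flatten := by
  induction L with
  | nil => rfl
  | cons b L ih =>
    rw [List.flatten_cons, altApply_append_of_dvd (hL b List.mem_cons_self),
      ih fun b hb => hL b (List.mem_cons_of_mem _ hb), List.map_cons, List.flatten_cons]

theorem flatten_mem_kstar {α : Type*} {T : Language α} {L : List (List α)}
    (hL : ∀ b ∈ L, b ∈ T∗) :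
    L.flatten ∈ T∗ :=
  kstar_idem T ▸ Language.join_mem_kstar hL

theorem altApply_mem_kstar {S T : Language Bool} (hS : ∀ b ∈ S, k ∣ b.length)
    (hST : ∀ b ∈ S, altApply k s b ∈ T∗) {w : List Bool} (hw : w ∈ S∗) :
    altApply k s w ∈ T∗ := by
  obtain ⟨L, rfl, hL⟩ := Language.mem_kstar.1 hw
  rw [altApply_flatten fun b hb => hS b (hL b hb)]
  exact flatten_mem_kstar <| by simpa using fun b hb => hST b (hL b hb)

theorem iterate_altApply_mem_kstar {S : ℕ → Language Bool}
    (hS : ∀ n, ∀ b ∈ S n, k ∣ b.length)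
    (hstep : ∀ n, ∀ b ∈ S (n + 1), altApply k s b ∈ (S n)∗) :
    ∀ n, ∀ w ∈ (S n)∗, (altApply k s)^[n] w ∈ (S 0)∗
  | 0, _, hw => hw
  | n + 1, _, hw =>
    iterate_altApply_mem_kstar hS hstep n _ (altApply_mem_kstar (hS (n + 1)) (hstep n) hw)

end AlternatingSubstitution

/-- The `n` smallest of the blocks `000 < 001 < 010`. -/
def s4Blocks : ℕ → Language Bool
  | 0 => 0
  | 1 => {[false, false, false]}
  | 2 => {[false, false, true], [false, false, false]}
  | _ => {[false, true, false], [false, false, true], [false, false, false]}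

theorem altApply_s4_mem_kstar (w : List Bool) : altApply 3 s4 w ∈ (s4Blocks 3)∗ := by
  refine flatten_mem_kstar ?_
  simp only [List.mem_map]
  rintro _ ⟨⟨_ | _, i⟩, -, rfl⟩
  · exact Language.nil_mem_kstar _
  · refine le_kstar (α := Language Bool) ?_
    simp only [s4, if_true, Nat.mod_mod]
    split_ifs
    · exact Or.inl rfl
    · exact Or.inr (Or.inl rfl)
    · exact Or.inr (Or.inr rfl)

theorem three_dvd_length_of_mem_s4Blocks :
    ∀ n, ∀ b ∈ s4Blocks n, 3 ∣ b.length
  | 0, _, hb => absurd hb (Language.notMem_zero _)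
  | 1, _, rfl => by decide
  | 2, _, hb => by rcases hb with rfl | rfl <;> decide
  | _ + 3, _, hb => by rcases hb with rfl | rfl | rfl <;> decide

theorem altApply_s4_mem_kstar_of_mem_s4Blocks_succ :
    ∀ n, ∀ b ∈ s4Blocks (n + 1), altApply 3 s4 b ∈ (s4Blocks n)∗
  | 0, _, rfl => Language.nil_mem_kstar _
  | 1, _, hb => by
    rcases hb with rfl | rfl
    exacts [le_kstar (α := Language Bool) rfl, Language.nil_mem_kstar _]
  | 2, _, hb => by
    rcases hb with rfl | rfl | rfl
    exacts [le_kstar (α := Language Bool) (Or.inl rfl),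
      le_kstar (α := Language Bool) (Or.inr rfl), Language.nil_mem_kstar _]
  | _ + 3, _, hb => by
    rcases hb with rfl | rfl | rfl
    exacts [le_kstar (α := Language Bool) (Or.inr (Or.inl rfl)),
      le_kstar (α := Language Bool) (Or.inr (Or.inr rfl)), Language.nil_mem_kstar _]

/-- σ₄ (whose table of values on length-3 blocks is recorded in
the first conjunct) is boundedly erasing: `σ₄⁸(w) = ε` for every finite word. -/
theorem sigma4_boundedly_erasing :
    (altApply 3 s4 [false, false, false] = [] ∧
     altApply 3 s4 [false, false, true] = [false, false, false] ∧
     altApply 3 s4 [false, true, false] = [false, false, true] ∧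
     altApply 3 s4 [false, true, true] = [false, false, true, false, false, false] ∧
     altApply 3 s4 [true, false, false] = [false, true, false] ∧
     altApply 3 s4 [true, false, true] = [false, true, false, false, false, false] ∧
     altApply 3 s4 [true, true, false] = [false, true, false, false, false, true] ∧
     altApply 3 s4 [true, true, true]
        = [false, true, false, false, false, true, false, false, false]) ∧
    ∀ w : List Bool, (altApply 3 s4)^[8] w = [] := by
  refine ⟨by decide, fun w => ?_⟩
  have h₄ : (altApply 3 s4)^[4] w ∈ (0 : Language Bool)∗ :=
    iterate_altApply_mem_kstar three_dvd_length_of_mem_s4Blocks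
      altApply_s4_mem_kstar_of_mem_s4Blocks_succ 3 _
      (altApply_s4_mem_kstar w)
  rw [kstar_zero, Language.mem_one] at h₄
  rw [show 8 = 4 + 4 from rfl, Function.iterate_add_apply, h₄]
  rfl
end

section
/- The map f_σ is continuous at every point of C^σ = [0,1] \ (Q₂⁰ ∪ E^σ), where Q₂⁰ is the set of dyadic rationals in [0,1) together with 0 and 1, and E^σ is the set of points whose canonical expansion ends in w_ε^∞ after a prefix of length a multiple of k. Moreover f_σ is left-continuous at every nonzero dyadic rational. -/
/-- Apply a `k`-block substitution blockwise to a finite word, dropping the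
trailing partial block (the paper's truncation convention). -/
def blockApply (k : Nat) (sigma : List Bool -> List Bool) (w : List Bool) : List Bool :=
  if h : 0 < k && k <= w.length then
    sigma (w.take k) ++ blockApply k sigma (w.drop k)
  else []
termination_by w.length
decreasing_by
  simp only [Bool.and_eq_true, decide_eq_true_eq] at h
  simp [List.length_drop]
  omega

/-- The length-`m` prefix of an infinite binary word. -/
def prefixOf (u : Nat -> Bool) (m : Nat) : List Bool := List.ofFn fun i : Fin m => u i

/-- Value of a finite binary word read as binary digits after the point. -/
noncomputable def valFin (w : List Bool) : ℝ :=
  (w.zipIdx.map fun p => if p.1 then ((2:ℝ))⁻¹ ^ (p.2 + 1) else 0).sum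

/-- Value of an infinite binary word read as binary digits after the point. -/
noncomputable def valInf (u : Nat -> Bool) : ℝ :=
  ∑' i : Nat, if u i then ((2:ℝ))⁻¹ ^ (i + 1) else 0

/-- A word is not eventually zero (it has infinitely many ones). -/
def NEZ (u : Nat -> Bool) : Prop := ∀ n, ∃ m, n ≤ m ∧ u m = true

open Classical in
/-- The unique binary expansion of `x ∈ (0,1]` not ending in `0^∞`
(junk value, the zero word, if no such expansion exists). -/
noncomputable def tilde (x : ℝ) : Nat -> Bool :=
  if h : ∃ u : Nat -> Bool, NEZ u ∧ valInf u = x then h.choose else fun _ => false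

open Classical in
/-- The interval map induced by the erasing `k`-block substitution `sigma`
(with erased block `weps`) acting on binary expansions: `f x = 0.sigma(x̃)`,
with value `0` at `x = 0` (no expansion not ending in `0^∞`) and when
`x̃ = weps^∞`. -/
noncomputable def fSigma (k : Nat) (sigma : List Bool -> List Bool) (weps : List Bool)
    (x : ℝ) : ℝ :=
  if (¬ ∃ u : Nat -> Bool, NEZ u ∧ valInf u = x) ∨
     (∀ i : Nat, tilde x i = weps.getD (i % k) false) then 0
  else ⨆ n : Nat, valFin (blockApply k sigma (prefixOf (tilde x) (n * k)))

/-- Dyadic rationals (in particular all of `Q₂⁰` within `[0,1]`). -/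
def Dyadic01 : Set ℝ := {x | ∃ a b : Nat, x = (a : ℝ) / 2 ^ b}

/-- The set `E^σ` of points whose canonical expansion ends in `weps^∞` after a
prefix of length a multiple of `k`. -/
def Esigma (k : Nat) (weps : List Bool) : Set ℝ :=
  {x | ∃ m : Nat, ∀ j : Nat, tilde x (m * k + j) = weps.getD (j % k) false}

/-!
For `x ∈ (0,1]` and every `N`, each `y` in the dyadic interval `(0.p, 0.p + 2^{-N}]`, where `p` is
the length-`N` prefix of `x̃`, has `ỹ` beginning with `p`. This interval is a neighbourhood of `x`
when `x` is not dyadic, and a left neighbourhood of `x` in any case. If `x ∉ E^σ`, infinitely many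
blocks of `x̃` are not erased, so `σ(p)` is long for large `N`, and both `f_σ(x)` and `f_σ(y)` lie
in the short dyadic interval determined by `σ(p)`. A nonzero dyadic `x` has `x̃` ending in `1^∞`,
which is not of the form `v w_ε^∞` because `w_ε ≠ 1^k`.
-/

open Set Filter Topology

theorem valFin_nil : valFin [] = 0 := by simp [valFin]

theorem valFin_cons (b : Bool) (w : List Bool) :
    valFin (b :: w) = (if b then (2:ℝ)⁻¹ else 0) + 2⁻¹ * valFin w := by
  simp only [valFin, List.zipIdx_cons, List.map_cons, List.sum_cons, List.zipIdx_succ,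
    List.map_map, ← List.sum_map_mul_left]
  congr 2
  · simp
  · congr 1
    funext ⟨c, i⟩
    cases c <;> simp [pow_succ, mul_comm]

theorem valFin_append (v w : List Bool) :
    valFin (v ++ w) = valFin v + (2:ℝ)⁻¹ ^ v.length * valFin w := by
  induction v with
  | nil => simp [valFin_nil]
  | cons b v ih => simp only [List.cons_append, valFin_cons, ih, List.length_cons, pow_succ']; ring

theorem valFin_nonneg (w : List Bool) : 0 ≤ valFin w := by
  induction w with
  | nil => simp [valFin_nil]
  | cons b w ih => rw [valFin_cons]; positivity

theorem valFin_le_valFin_append (v w : List Bool) : valFin v ≤ valFin (v ++ w) := by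
  rw [valFin_append]
  exact le_add_of_nonneg_right (mul_nonneg (by positivity) (valFin_nonneg w))

theorem valFin_add_pow_le_one (w : List Bool) : valFin w + (2:ℝ)⁻¹ ^ w.length ≤ 1 := by
  induction w with
  | nil => simp [valFin_nil]
  | cons b w ih =>
    rw [valFin_cons, List.length_cons, pow_succ']
    have : (if b then (2:ℝ)⁻¹ else 0) ≤ 2⁻¹ := by split <;> norm_num
    linarith

theorem valFin_le_one (w : List Bool) : valFin w ≤ 1 :=
  le_of_add_le_of_nonneg_left (valFin_add_pow_le_one w) (by positivity)

theorem valFin_append_le (v w : List Bool) :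
    valFin (v ++ w) ≤ valFin v + (2:ℝ)⁻¹ ^ v.length := by
  rw [valFin_append]
  gcongr
  exact mul_le_of_le_one_right (by positivity) (valFin_le_one w)

theorem exists_valFin_mul_pow_eq (w : List Bool) : ∃ a : ℕ, valFin w * 2 ^ w.length = a := by
  induction w with
  | nil => exact ⟨0, by simp [valFin_nil]⟩
  | cons b w ih =>
    obtain ⟨a, ha⟩ := ih
    refine ⟨(if b then 2 ^ w.length else 0) + a, ?_⟩
    push_cast
    rw [valFin_cons, List.length_cons, pow_succ', ← ha]
    cases b <;> simp only [Bool.false_eq_true, ↓reduceIte] <;> ring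

theorem hasSum_inv_two_pow_succ : HasSum (fun i : ℕ => (2:ℝ)⁻¹ ^ (i + 1)) 1 :=
  (hasSum_geometric_two' 1).congr_fun fun i => by rw [pow_succ]; simp [div_eq_mul_inv, mul_comm]

theorem valInf_term_le (u : ℕ → Bool) (i : ℕ) :
    (if u i then (2:ℝ)⁻¹ ^ (i + 1) else 0) ≤ 2⁻¹ ^ (i + 1) := by
  split
  exacts [le_rfl, by positivity]

theorem valInf_summable (u : ℕ → Bool) :
    Summable fun i => if u i then (2:ℝ)⁻¹ ^ (i + 1) else 0 :=
  .of_nonneg_of_le (fun i => by positivity) (valInf_term_le u) hasSum_inv_two_pow_succ.summable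

theorem valInf_nonneg (u : ℕ → Bool) : 0 ≤ valInf u :=
  tsum_nonneg fun i => by positivity

theorem valInf_le_one (u : ℕ → Bool) : valInf u ≤ 1 :=
  hasSum_le (valInf_term_le u) (valInf_summable u).hasSum hasSum_inv_two_pow_succ

theorem valInf_eq (u : ℕ → Bool) :
    valInf u = (if u 0 then (2:ℝ)⁻¹ else 0) + 2⁻¹ * valInf fun i => u (i + 1) := by
  rw [valInf, (valInf_summable u).tsum_eq_zero_add, valInf, ← tsum_mul_left]
  congr 1
  · simp
  · congr 1 with i
    split <;> simp [pow_succ']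

theorem prefixOf_succ (u : ℕ → Bool) (n : ℕ) :
    prefixOf u (n + 1) = u 0 :: prefixOf (fun i => u (i + 1)) n := by
  simp [prefixOf, List.ofFn_succ]

theorem prefixOf_length (u : ℕ → Bool) (n : ℕ) : (prefixOf u n).length = n := by
  simp [prefixOf]

theorem prefixOf_add (u : ℕ → Bool) (m n : ℕ) :
    prefixOf u (m + n) = prefixOf u m ++ prefixOf (fun i => u (m + i)) n := by
  simp [prefixOf, List.ofFn_add]

theorem prefixOf_concat (u : ℕ → Bool) (n : ℕ) :
    prefixOf u (n + 1) = prefixOf u n ++ [u n] := by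
  rw [prefixOf_add]
  simp [prefixOf]

theorem getD_prefixOf (u : ℕ → Bool) {N i : ℕ} (hi : i < N) :
    (prefixOf u N).getD i false = u i := by
  rw [List.getD_eq_getElem _ _ (by rwa [prefixOf_length])]
  simp [prefixOf]

theorem apply_eq_of_prefixOf_eq {u v : ℕ → Bool} {N : ℕ} (h : prefixOf u N = prefixOf v N)
    {i : ℕ} (hi : i < N) : u i = v i :=
  congrFun (List.ofFn_injective h) ⟨i, hi⟩

theorem valInf_eq_valFin_add (u : ℕ → Bool) (N : ℕ) :
    valInf u = valFin (prefixOf u N) + (2:ℝ)⁻¹ ^ N * valInf fun i => u (N + i) := by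
  induction N generalizing u with
  | zero => simp [prefixOf, valFin_nil]
  | succ N ih =>
    rw [prefixOf_succ, valFin_cons, valInf_eq u, ih, pow_succ']
    simp only [add_comm N 1, ← add_assoc, add_comm _ 1]
    ring

theorem NEZ.shift {u : ℕ → Bool} (hu : NEZ u) (N : ℕ) : NEZ fun i => u (N + i) := by
  intro n
  obtain ⟨m, hm, hum⟩ := hu (N + n)
  refine ⟨m - N, by omega, ?_⟩
  simpa only [Nat.add_sub_cancel' (by omega : N ≤ m)] using hum

theorem NEZ.valInf_pos {u : ℕ → Bool} (hu : NEZ u) : 0 < valInf u := by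
  obtain ⟨m, -, hm⟩ := hu 0
  have hle := (valInf_summable u).le_tsum m fun j _ => by positivity
  rw [hm, if_pos rfl] at hle
  exact (pow_pos (by norm_num) _).trans_le hle

theorem valInf_mem_Icc (u : ℕ → Bool) (N : ℕ) :
    valInf u ∈ Icc (valFin (prefixOf u N)) (valFin (prefixOf u N) + (2:ℝ)⁻¹ ^ N) := by
  have := valInf_nonneg fun i => u (N + i)
  have := valInf_le_one fun i => u (N + i)
  rw [valInf_eq_valFin_add u N]
  constructor <;> nlinarith [pow_pos (by norm_num : (0:ℝ) < 2⁻¹) N]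

theorem NEZ.valInf_mem_Ioc {u : ℕ → Bool} (hu : NEZ u) (N : ℕ) :
    valInf u ∈ Ioc (valFin (prefixOf u N)) (valFin (prefixOf u N) + (2:ℝ)⁻¹ ^ N) := by
  have := (hu.shift N).valInf_pos
  refine ⟨?_, (valInf_mem_Icc u N).2⟩
  rw [valInf_eq_valFin_add u N]
  nlinarith [pow_pos (by norm_num : (0:ℝ) < 2⁻¹) N]

theorem prefixOf_eq_of_valInf_mem_Ioc {v : ℕ → Bool} (hv : NEZ v) {w : List Bool}
    (h : valInf v ∈ Ioc (valFin w) (valFin w + (2:ℝ)⁻¹ ^ w.length)) :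
    prefixOf v w.length = w := by
  induction w generalizing v with
  | nil => rfl
  | cons b w ih =>
    have hv' : NEZ fun i => v (i + 1) := by simpa only [add_comm 1] using hv.shift 1
    have ht0 := hv'.valInf_pos
    have ht1 := valInf_le_one fun i => v (i + 1)
    have hw0 := valFin_nonneg w
    have hw1 := valFin_add_pow_le_one w
    rw [valInf_eq, valFin_cons, List.length_cons, pow_succ'] at h
    obtain ⟨h1, h2⟩ := h
    have hb : v 0 = b := by
      cases b <;> cases hv0 : v 0 <;> simp only [hv0, Bool.false_eq_true, ↓reduceIte] at h1 h2 <;>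
        first | rfl | linarith
    subst hb
    rw [List.length_cons, prefixOf_succ, ih hv' ⟨by linarith, by linarith⟩]

theorem nez_and_valInf_eq {u : ℕ → Bool} {y : ℝ}
    (h : ∀ n, y ∈ Ioc (valFin (prefixOf u n)) (valFin (prefixOf u n) + (2:ℝ)⁻¹ ^ n)) :
    NEZ u ∧ valInf u = y := by
  have hval : valInf u = y := eq_of_forall_dist_le fun ε hε => by
    obtain ⟨n, hn⟩ := exists_pow_lt_of_lt_one hε (by norm_num : (2:ℝ)⁻¹ < 1)
    have := Real.dist_le_of_mem_Icc (valInf_mem_Icc u n) (Ioc_subset_Icc_self (h n))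
    linarith
  refine ⟨fun n => ?_, hval⟩
  by_contra! hn
  have htail : (valInf fun i => u (n + i)) = 0 := by
    simp [valInf, hn _ (Nat.le_add_right n _)]
  have := (h n).1
  rw [← hval, valInf_eq_valFin_add u n, htail] at this
  linarith

theorem exists_nez_valInf_eq {y : ℝ} (hy : y ∈ Ioc 0 1) :
    ∃ u : ℕ → Bool, NEZ u ∧ valInf u = y := by
  -- `a n / 2 ^ n` is the largest dyadic of level `n` strictly below `y`
  set a : ℕ → ℤ := fun n => ⌈y * 2 ^ n⌉ - 1
  have ha : ∀ n, (a n : ℝ) < y * 2 ^ n ∧ y * 2 ^ n ≤ a n + 1 := fun n => by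
    constructor <;> push_cast [a] <;>
      linarith [Int.ceil_lt_add_one (y * 2 ^ n), Int.le_ceil (y * 2 ^ n)]
  have ha0 : a 0 = 0 := by
    have : ⌈y⌉ = 1 := Int.ceil_eq_iff.mpr (by norm_num; exact hy)
    simp [a, this]
  have hsucc : ∀ n, a (n + 1) = 2 * a n ∨ a (n + 1) = 2 * a n + 1 := fun n => by
    have h1 := ha n
    have h2 := ha (n + 1)
    rw [pow_succ] at h2
    have c1 : (a (n + 1) : ℝ) < 2 * a n + 2 := by linarith
    have c2 : 2 * (a n : ℝ) < a (n + 1) + 1 := by linarith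
    norm_cast at c1 c2
    omega
  set u : ℕ → Bool := fun n => decide (a (n + 1) = 2 * a n + 1)
  have hpre : ∀ n, valFin (prefixOf u n) * 2 ^ n = a n := fun n => by
    induction n with
    | zero => simp [prefixOf, valFin_nil, ha0]
    | succ n ih =>
      have e : (2:ℝ)⁻¹ ^ n * 2 ^ n = 1 := by rw [← mul_pow]; norm_num
      rw [prefixOf_concat, valFin_append, prefixOf_length, valFin_cons, valFin_nil, pow_succ]
      rcases hsucc n with h | h
      · have hu : u n = false := by simp [u, h]
        simp only [hu, Bool.false_eq_true, ↓reduceIte, h]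
        push_cast
        linear_combination 2 * ih
      · have hu : u n = true := by simp [u, h]
        simp only [hu, ↓reduceIte, h]
        push_cast
        linear_combination 2 * ih + e
  refine ⟨u, nez_and_valInf_eq fun n => ?_⟩
  have hp : (0:ℝ) < 2 ^ n := by positivity
  have hv : valFin (prefixOf u n) = a n / 2 ^ n := by rw [← hpre]; field_simp
  obtain ⟨h1, h2⟩ := ha n
  rw [hv, inv_pow, ← one_div, ← add_div]
  exact ⟨(div_lt_iff₀ hp).mpr h1, (le_div_iff₀ hp).mpr h2⟩

theorem tilde_spec {y : ℝ} (hy : y ∈ Ioc 0 1) : NEZ (tilde y) ∧ valInf (tilde y) = y := by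
  rw [tilde, dif_pos (exists_nez_valInf_eq hy)]
  exact (exists_nez_valInf_eq hy).choose_spec

theorem Ioc_valFin_subset_Ioc_zero_one (w : List Bool) :
    Ioc (valFin w) (valFin w + (2:ℝ)⁻¹ ^ w.length) ⊆ Ioc 0 1 := fun _ hy =>
  ⟨(valFin_nonneg w).trans_lt hy.1, hy.2.trans (valFin_add_pow_le_one w)⟩

theorem prefixOf_tilde_eq {w : List Bool} {y : ℝ}
    (hy : y ∈ Ioc (valFin w) (valFin w + (2:ℝ)⁻¹ ^ w.length)) :
    prefixOf (tilde y) w.length = w := by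
  obtain ⟨hnez, hval⟩ := tilde_spec (Ioc_valFin_subset_Ioc_zero_one w hy)
  exact prefixOf_eq_of_valInf_mem_Ioc hnez (by rwa [hval])

/-- The level-`N` dyadic interval containing `x`; it is open on the left because `x̃` does not
end in `0^∞`. -/
def dyadicIoc (x : ℝ) (N : ℕ) : Set ℝ :=
  Ioc (valFin (prefixOf (tilde x) N)) (valFin (prefixOf (tilde x) N) + (2:ℝ)⁻¹ ^ N)

theorem dyadicIoc_subset_Ioc_zero_one (x : ℝ) (N : ℕ) : dyadicIoc x N ⊆ Ioc 0 1 := by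
  simpa only [dyadicIoc, prefixOf_length] using
    Ioc_valFin_subset_Ioc_zero_one (prefixOf (tilde x) N)

theorem prefixOf_tilde_eq_of_mem_dyadicIoc {x y : ℝ} {N : ℕ} (hy : y ∈ dyadicIoc x N) :
    prefixOf (tilde y) N = prefixOf (tilde x) N := by
  simpa only [prefixOf_length] using
    prefixOf_tilde_eq (w := prefixOf (tilde x) N) (by rwa [prefixOf_length])

theorem self_mem_dyadicIoc {x : ℝ} (hx : x ∈ Ioc 0 1) (N : ℕ) : x ∈ dyadicIoc x N := by
  obtain ⟨hnez, hval⟩ := tilde_spec hx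
  simpa only [dyadicIoc, hval] using hnez.valInf_mem_Ioc N

theorem valFin_add_pow_mem_dyadic01 (w : List Bool) :
    valFin w + (2:ℝ)⁻¹ ^ w.length ∈ Dyadic01 := by
  obtain ⟨a, ha⟩ := exists_valFin_mul_pow_eq w
  refine ⟨a + 1, w.length, ?_⟩
  rw [eq_div_iff (by positivity), add_mul, ha, ← mul_pow, inv_mul_cancel₀ two_ne_zero, one_pow]
  push_cast
  rfl

theorem dyadicIoc_mem_nhds {x : ℝ} (hx : x ∈ Ioc 0 1) (hxd : x ∉ Dyadic01) (N : ℕ) :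
    dyadicIoc x N ∈ 𝓝 x := by
  obtain ⟨h1, h2⟩ := self_mem_dyadicIoc hx N
  have hne : x ≠ valFin (prefixOf (tilde x) N) + 2⁻¹ ^ N := by
    intro h
    rw [h] at hxd
    have := valFin_add_pow_mem_dyadic01 (prefixOf (tilde x) N)
    rw [prefixOf_length] at this
    exact hxd this
  exact mem_of_superset (Ioo_mem_nhds h1 (h2.lt_of_ne hne)) Ioo_subset_Ioc_self

theorem dyadicIoc_mem_nhdsLT {x : ℝ} (hx : x ∈ Ioc 0 1) (N : ℕ) : dyadicIoc x N ∈ 𝓝[<] x :=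
  have h := self_mem_dyadicIoc hx N
  mem_of_superset (Ioo_mem_nhdsLT h.1) (Ioo_subset_Ioc_self.trans (Ioc_subset_Ioc_right h.2))

theorem NEZ.eq_true_of_valInf_eq_div {u : ℕ → Bool} (hu : NEZ u) {a b : ℕ}
    (hval : valInf u = a / 2 ^ b) {m : ℕ} (hm : b ≤ m) : u m = true := by
  set t := valInf fun i => u (m + i)
  -- `2 ^ m * valInf u` and `2 ^ m * valFin (prefixOf u m)` are integers, and `t ∈ (0, 1]`
  have ht : t = 1 := by
    obtain ⟨c, hc⟩ := exists_valFin_mul_pow_eq (prefixOf u m)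
    rw [prefixOf_length] at hc
    have hsplit : ((a * 2 ^ (m - b) : ℕ) : ℝ) = c + t := by
      have e : (2:ℝ) ^ m = 2 ^ b * 2 ^ (m - b) := by rw [← pow_add, Nat.add_sub_cancel' hm]
      have e' : (2:ℝ)⁻¹ ^ m * 2 ^ m = 1 := by rw [← mul_pow]; norm_num
      calc ((a * 2 ^ (m - b) : ℕ) : ℝ) = valInf u * 2 ^ m := by
            rw [hval, e]; push_cast; field_simp
        _ = c + t := by rw [valInf_eq_valFin_add u m]; linear_combination hc + t * e'
    obtain ⟨n, hn⟩ : ∃ n : ℤ, t = n :=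
      ⟨(a * 2 ^ (m - b) : ℕ) - c, by push_cast at hsplit ⊢; linarith⟩
    have h0 : (0:ℝ) < n := hn ▸ (hu.shift m).valInf_pos
    have h1 : (n:ℝ) ≤ 1 := hn ▸ valInf_le_one _
    have hn1 : n = 1 := by
      have : (0:ℤ) < n := by exact_mod_cast h0
      have : n ≤ 1 := by exact_mod_cast h1
      omega
    rw [hn, hn1, Int.cast_one]
  by_contra hum
  have := valInf_eq fun i => u (m + i)
  simp only [add_zero, hum, ↓reduceIte, zero_add] at this
  linarith [valInf_le_one fun i => u (m + (i + 1))]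

section BlockApply

variable {k : ℕ} (sigma : List Bool → List Bool)

theorem blockApply_of_length_lt {w : List Bool} (h : w.length < k) : blockApply k sigma w = [] := by
  rw [blockApply, dif_neg (by simp only [Bool.and_eq_true, decide_eq_true_eq]; omega)]

theorem blockApply_of_le_length (hk : 0 < k) {w : List Bool} (h : k ≤ w.length) :
    blockApply k sigma w = sigma (w.take k) ++ blockApply k sigma (w.drop k) := by
  rw [blockApply, dif_pos (by simp [hk, h])]

theorem blockApply_of_length_eq (hk : 0 < k) {w : List Bool} (h : w.length = k) :
    blockApply k sigma w = sigma w := by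
  rw [blockApply_of_le_length sigma hk h.ge, List.take_of_length_le h.le,
    List.drop_of_length_le h.le, blockApply_of_length_lt sigma (by simpa using hk), List.append_nil]

theorem blockApply_append (hk : 0 < k) {w : List Bool} (v : List Bool) (hw : k ∣ w.length) :
    blockApply k sigma (w ++ v) = blockApply k sigma w ++ blockApply k sigma v := by
  obtain ⟨c, hc⟩ := hw
  induction c generalizing w with
  | zero =>
    obtain rfl : w = [] := List.eq_nil_of_length_eq_zero (by simpa using hc)
    rw [List.nil_append, blockApply_of_length_lt sigma (w := []) (by simpa using hk),
      List.nil_append]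
  | succ c ih =>
    have hkw : k ≤ w.length := hc ▸ Nat.le_mul_of_pos_right k c.succ_pos
    rw [blockApply_of_le_length sigma hk (hkw.trans (by simp)),
      blockApply_of_le_length sigma hk hkw,
      List.take_append_of_le_length hkw, List.drop_append_of_le_length hkw,
      ih (by simp [hc, Nat.mul_succ]), List.append_assoc]

end BlockApply

def nthBlock (k : ℕ) (u : ℕ → Bool) (n : ℕ) : List Bool := prefixOf (fun i => u (n * k + i)) k

def imagePrefix (k : ℕ) (sigma : List Bool → List Bool) (u : ℕ → Bool) (n : ℕ) : List Bool :=
  blockApply k sigma (prefixOf u (n * k))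

def IsBlockPower (k : ℕ) (w : List Bool) (u : ℕ → Bool) : Prop :=
  ∀ i, u i = w.getD (i % k) false

/-- `u = v w^∞` with `v` a word of length a multiple of `k`; thus `Esigma k w` is the set of `x`
with `EndsInBlock k w (tilde x)`. -/
def EndsInBlock (k : ℕ) (w : List Bool) (u : ℕ → Bool) : Prop :=
  ∃ m, IsBlockPower k w fun j => u (m * k + j)

theorem not_isBlockPower_of_not_endsInBlock {k : ℕ} {w : List Bool} {u : ℕ → Bool}
    (h : ¬EndsInBlock k w u) : ¬IsBlockPower k w u :=
  fun hu => h ⟨0, by simpa only [zero_mul, zero_add] using hu⟩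

theorem exists_ne_of_not_endsInBlock {k : ℕ} {w : List Bool} {u : ℕ → Bool}
    (h : ¬EndsInBlock k w u) (m : ℕ) : ∃ j, u (m * k + j) ≠ w.getD (j % k) false :=
  not_forall.mp fun hm => h ⟨m, hm⟩

theorem exists_nthBlock_ne {k : ℕ} (hk : 0 < k) {w : List Bool} {u : ℕ → Bool}
    (h : ¬EndsInBlock k w u) (m : ℕ) : ∃ b, m ≤ b ∧ nthBlock k u b ≠ w := by
  obtain ⟨j, hj⟩ := exists_ne_of_not_endsInBlock h m
  refine ⟨m + j / k, Nat.le_add_right m _, fun hb => hj ?_⟩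
  rw [← hb, nthBlock, getD_prefixOf _ (Nat.mod_lt _ hk), add_mul, add_assoc, Nat.div_add_mod']

theorem not_endsInBlock_of_eventually_true {k : ℕ} (hk : 0 < k) {w : List Bool}
    (hlen : w.length = k) (hw : w ≠ List.replicate k true) {u : ℕ → Bool} {b : ℕ}
    (hu : ∀ m, b ≤ m → u m = true) : ¬EndsInBlock k w u := by
  obtain ⟨r, hr, hwr⟩ : ∃ r, r < k ∧ w.getD r false = false := by
    obtain ⟨c, hc, hct⟩ : ∃ c ∈ w, c ≠ true := by
      simpa [List.eq_replicate_iff, hlen] using hw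
    obtain ⟨r, hr, rfl⟩ := List.mem_iff_getElem.mp hc
    exact ⟨r, hlen ▸ hr, by rw [List.getD_eq_getElem _ _ hr]; simpa using hct⟩
  rintro ⟨m, hm⟩
  have : u (m * k + (b * k + r)) = _ := hm (b * k + r)
  rw [hu _ (by nlinarith), Nat.mul_add_mod', Nat.mod_eq_of_lt hr, hwr] at this
  simp at this

section ImagePrefix

variable {k : ℕ} (sigma : List Bool → List Bool)

theorem imagePrefix_add (hk : 0 < k) (u : ℕ → Bool) (m n : ℕ) :
    imagePrefix k sigma u (m + n) =
      imagePrefix k sigma u m ++ imagePrefix k sigma (fun i => u (m * k + i)) n := by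
  rw [imagePrefix, add_mul, prefixOf_add,
    blockApply_append sigma hk _ (by rw [prefixOf_length]; exact dvd_mul_left k m)]
  rfl

theorem imagePrefix_succ (hk : 0 < k) (u : ℕ → Bool) (n : ℕ) :
    imagePrefix k sigma u (n + 1) = imagePrefix k sigma u n ++ sigma (nthBlock k u n) := by
  rw [imagePrefix_add sigma hk]
  congr 1
  rw [imagePrefix, one_mul, blockApply_of_length_eq sigma hk (prefixOf_length _ _)]
  rfl

theorem monotone_length_imagePrefix (hk : 0 < k) (u : ℕ → Bool) :
    Monotone fun n => (imagePrefix k sigma u n).length :=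
  monotone_nat_of_le_succ fun n => by simp [imagePrefix_succ sigma hk]

theorem valFin_imagePrefix_le_add (hk : 0 < k) (u : ℕ → Bool) (m n : ℕ) :
    valFin (imagePrefix k sigma u m) ≤
      valFin (imagePrefix k sigma u n) + (2:ℝ)⁻¹ ^ (imagePrefix k sigma u n).length := by
  calc valFin (imagePrefix k sigma u m)
      ≤ valFin (imagePrefix k sigma u (m + n)) := by
        rw [imagePrefix_add sigma hk]; exact valFin_le_valFin_append _ _
    _ = valFin (imagePrefix k sigma u (n + m)) := by rw [add_comm]
    _ ≤ _ := by rw [imagePrefix_add sigma hk]; exact valFin_append_le _ _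

theorem iSup_valFin_imagePrefix_mem_Icc (hk : 0 < k) (u : ℕ → Bool) (n : ℕ) :
    ⨆ m, valFin (imagePrefix k sigma u m) ∈
      Icc (valFin (imagePrefix k sigma u n))
        (valFin (imagePrefix k sigma u n) + (2:ℝ)⁻¹ ^ (imagePrefix k sigma u n).length) :=
  ⟨le_ciSup ⟨1, Set.forall_mem_range.mpr fun _ => valFin_le_one _⟩ n,
    ciSup_le fun m => valFin_imagePrefix_le_add sigma hk u m n⟩

theorem exists_le_length_imagePrefix {w : List Bool} (hk : 0 < k)
    (hσ : ∀ v : List Bool, v.length = k → sigma v = [] → v = w)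
    {u : ℕ → Bool} (hu : ¬EndsInBlock k w u) (c : ℕ) :
    ∃ n, c ≤ (imagePrefix k sigma u n).length := by
  induction c with
  | zero => exact ⟨0, Nat.zero_le _⟩
  | succ c ih =>
    obtain ⟨n, hn⟩ := ih
    obtain ⟨b, hnb, hb⟩ := exists_nthBlock_ne hk hu n
    have hσb : sigma (nthBlock k u b) ≠ [] := fun he => hb (hσ _ (prefixOf_length _ _) he)
    refine ⟨b + 1, ?_⟩
    rw [imagePrefix_succ sigma hk, List.length_append]
    have : (imagePrefix k sigma u n).length ≤ (imagePrefix k sigma u b).length :=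
      monotone_length_imagePrefix sigma hk u hnb
    have := List.length_pos_iff.mpr hσb
    omega

/-- Words sharing a long enough prefix with `u` share a long image under `σ`, because `u` has
infinitely many non-erased blocks. -/
theorem exists_dist_iSup_valFin_imagePrefix_lt {w : List Bool} (hk : 0 < k)
    (hσ : ∀ v : List Bool, v.length = k → sigma v = [] → v = w)
    {u : ℕ → Bool} (hu : ¬EndsInBlock k w u) {ε : ℝ} (hε : 0 < ε) :
    ∃ N, ∀ v, prefixOf v N = prefixOf u N → ¬IsBlockPower k w v ∧
      dist (⨆ n, valFin (imagePrefix k sigma v n)) (⨆ n, valFin (imagePrefix k sigma u n)) < ε := by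
  obtain ⟨c, hc⟩ := exists_pow_lt_of_lt_one hε (by norm_num : (2:ℝ)⁻¹ < 1)
  obtain ⟨n, hn⟩ := exists_le_length_imagePrefix sigma hk hσ hu c
  obtain ⟨j, hj⟩ := exists_ne_of_not_endsInBlock hu n
  have hjN : n * k + j < (n + j + 1) * k := by nlinarith
  refine ⟨(n + j + 1) * k, fun v hv => ⟨fun hvw => hj ?_, ?_⟩⟩
  · rw [← apply_eq_of_prefixOf_eq hv hjN, hvw, Nat.mul_add_mod']
  have hW : imagePrefix k sigma v (n + j + 1) = imagePrefix k sigma u (n + j + 1) := by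
    rw [imagePrefix, imagePrefix, hv]
  have hlen := hn.trans (monotone_length_imagePrefix sigma hk u (by omega : n ≤ n + j + 1))
  have hv' := iSup_valFin_imagePrefix_mem_Icc sigma hk v (n + j + 1)
  rw [hW] at hv'
  calc _ ≤ (2:ℝ)⁻¹ ^ (imagePrefix k sigma u (n + j + 1)).length := by
        simpa using Real.dist_le_of_mem_Icc hv'
          (iSup_valFin_imagePrefix_mem_Icc sigma hk u (n + j + 1))
    _ ≤ 2⁻¹ ^ c := pow_le_pow_of_le_one (by norm_num) (by norm_num) hlen
    _ < ε := hc

end ImagePrefix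

theorem fSigma_eq_iSup (k : ℕ) (sigma : List Bool → List Bool) {weps : List Bool} {x : ℝ}
    (hx : x ∈ Ioc 0 1) (h : ¬IsBlockPower k weps (tilde x)) :
    fSigma k sigma weps x = ⨆ n, valFin (imagePrefix k sigma (tilde x) n) := by
  rw [fSigma, if_neg]
  · rfl
  · exact not_or.mpr ⟨not_not.mpr ⟨_, tilde_spec hx⟩, h⟩

theorem tendsto_fSigma_of_dyadicIoc_mem {k : ℕ} (hk : 0 < k) (sigma : List Bool → List Bool)
    {weps : List Bool} (hσ : ∀ v : List Bool, v.length = k → sigma v = [] → v = weps)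
    {x : ℝ} (hx : x ∈ Ioc 0 1) (hxE : ¬EndsInBlock k weps (tilde x)) {l : Filter ℝ}
    (hl : ∀ N, dyadicIoc x N ∈ l) :
    Tendsto (fSigma k sigma weps) l (𝓝 (fSigma k sigma weps x)) := by
  refine Metric.tendsto_nhds.mpr fun ε hε => ?_
  obtain ⟨N, hN⟩ := exists_dist_iSup_valFin_imagePrefix_lt sigma hk hσ hxE hε
  filter_upwards [hl N] with y hy
  obtain ⟨hyw, hdist⟩ := hN _ (prefixOf_tilde_eq_of_mem_dyadicIoc hy)
  rwa [fSigma_eq_iSup k sigma (dyadicIoc_subset_Ioc_zero_one x N hy) hyw,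
    fSigma_eq_iSup k sigma hx (not_isBlockPower_of_not_endsInBlock hxE)]

/-- `fSigma` is continuous (within `[0,1]`) at every point of
`C^σ = [0,1] \ (Q₂⁰ ∪ E^σ)`, and left-continuous at every nonzero dyadic
rational of `[0,1]`. -/
theorem fSigma_continuity
    (k : Nat) (sigma : List Bool -> List Bool) (weps : List Bool)
    (hk : 2 ≤ k) (hlen : weps.length = k)
    (hne1 : weps ≠ List.replicate k true)
    (herase : ∀ w : List Bool, w.length = k → (sigma w = [] ↔ w = weps)) :
    (∀ x ∈ Set.Icc (0:ℝ) 1 \ (Dyadic01 ∪ Esigma k weps),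
      ContinuousWithinAt (fSigma k sigma weps) (Set.Icc 0 1) x) ∧
    (∀ x ∈ Dyadic01 ∩ Set.Icc (0:ℝ) 1, x ≠ 0 →
      Filter.Tendsto (fSigma k sigma weps) (nhdsWithin x (Set.Iio x))
        (nhds (fSigma k sigma weps x))) := by
  have hk0 : 0 < k := by omega
  have hσ : ∀ v : List Bool, v.length = k → sigma v = [] → v = weps := fun v hv => (herase v hv).mp
  refine ⟨fun x ⟨⟨hx0, hx1⟩, hx⟩ => ?_, fun x ⟨⟨a, b, hab⟩, hx0, hx1⟩ hx => ?_⟩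
  · have hxd : x ∉ Dyadic01 := fun h => hx (Or.inl h)
    have hxI : x ∈ Ioc 0 1 := ⟨hx0.lt_of_ne (by rintro rfl; exact hxd ⟨0, 0, by simp⟩), hx1⟩
    exact tendsto_fSigma_of_dyadicIoc_mem hk0 sigma hσ hxI (fun h => hx (Or.inr h))
      fun N => nhdsWithin_le_nhds (dyadicIoc_mem_nhds hxI hxd N)
  · have hxI : x ∈ Ioc 0 1 := ⟨hx0.lt_of_ne' hx, hx1⟩
    obtain ⟨hnez, hval⟩ := tilde_spec hxI
    have htrue : ∀ m, b ≤ m → tilde x m = true :=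
      fun _ => hnez.eq_true_of_valInf_eq_div (hval.trans hab)
    exact tendsto_fSigma_of_dyadicIoc_mem hk0 sigma hσ hxI
      (not_endsInBlock_of_eventually_true hk0 hlen hne1 htrue) (dyadicIoc_mem_nhdsLT hxI)
end
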